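/- arXiv:2303.04342 — 2 statements merged into one kernel-verified Lean document; each statement's English description precedes it below -/
import Mathlib

section
/- For a real number a with |a| < 1 and small real ε > 0, the squared modulus of a + iε ± i√(1 − (a+iε)²) equals 1 ± 2ε/√(1−a²) + O(ε²) as ε → 0; in particular, for sufficiently small ε > 0, the root with the minus sign lies strictly inside the unit circle and the root with the plus sign lies strictly outside. -/
open Filter Topology Asymptotics

/-! Near `ε = 0` the branch `(1 - z²)^{1/2}` stays in the slit plane, so `ε ↦ ‖z_±(a + εi)‖²` is
real-analytic and equals its first-order Taylor polynomial up to `O(ε²)`. At `ε = 0` the poles are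
`a ± i√(1 - a²)`, of modulus one, and the chain rule, with
`d/dz (1 - z²)^{1/2} = -z/(1 - z²)^{1/2}`, gives the slope `±2/√(1 - a²)`. Since this slope is
nonzero it beats the `O(ε²)` error for small `ε > 0`, which puts `z_-` inside and `z_+` outside
the unit circle. -/

theorem AnalyticAt.isBigO_sub_sub_smul_deriv {𝕜 E : Type*} [NontriviallyNormedField 𝕜]
    [NormedAddCommGroup E] [NormedSpace 𝕜 E] {f : 𝕜 → E} {x : 𝕜} (hf : AnalyticAt 𝕜 f x) :
    (fun y => f (x + y) - f x - y • deriv f x) =O[𝓝 0] fun y => ‖y‖ ^ 2 := by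
  obtain ⟨p, hp⟩ := hf
  have hpartial : ∀ y, p.partialSum 2 y = f x + y • deriv f x := fun y => by
    have h0 : p 0 (fun _ => y) = f x := hp.coeff_zero _
    have h1 : p 1 (fun _ => y) = y • deriv f x := by
      rw [hp.deriv, p.apply_eq_pow_smul_coeff, p.apply_eq_pow_smul_coeff, one_pow, one_smul,
        pow_one]
    simp only [FormalMultilinearSeries.partialSum, Finset.sum_range_succ, Finset.sum_range_zero,
      zero_add, h0, h1]
  simpa [hpartial, sub_sub] using hp.isBigO_sub_partialSum_pow 2

theorem AnalyticAt.norm_sq {E F : Type*} [NormedAddCommGroup E] [NormedSpace ℝ E]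
    [NormedAddCommGroup F] [InnerProductSpace ℝ F] {f : E → F} {x : E} (hf : AnalyticAt ℝ f x) :
    AnalyticAt ℝ (fun y => ‖f y‖ ^ 2) x := by
  simp_rw [← real_inner_self_eq_norm_sq]
  exact ((innerSL ℝ (E := F)).analyticAt_bilinear (f x, f x)).comp (f := fun y => (f y, f y))
    (hf.prod hf)

theorem eventually_const_lt_of_isBigO_sub_linear {f : ℝ → ℝ} {c₀ b : ℝ} (hb : 0 < b)
    (hf : (fun ε => f ε - (c₀ + b * ε)) =O[𝓝[>] 0] fun ε => ε ^ 2) :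
    ∀ᶠ ε in 𝓝[>] 0, c₀ < f ε := by
  have hlittle := hf.trans_isLittleO ((isLittleO_pow_id one_lt_two).mono nhdsWithin_le_nhds)
  filter_upwards [hlittle.def (half_pos hb), self_mem_nhdsWithin] with ε hε hpos
  rw [Real.norm_eq_abs, Real.norm_eq_abs, abs_of_pos (show (0 : ℝ) < ε from hpos)] at hε
  linarith [neg_abs_le (f ε - (c₀ + b * ε)), mul_pos hb hpos]

theorem eventually_lt_const_of_isBigO_sub_linear {f : ℝ → ℝ} {c₀ b : ℝ} (hb : b < 0)
    (hf : (fun ε => f ε - (c₀ + b * ε)) =O[𝓝[>] 0] fun ε => ε ^ 2) :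
    ∀ᶠ ε in 𝓝[>] 0, f ε < c₀ := by
  have h := eventually_const_lt_of_isBigO_sub_linear (f := -f) (c₀ := -c₀) (neg_pos.2 hb)
    (hf.neg_left.congr_left fun ε => by simp only [Pi.neg_apply]; ring)
  filter_upwards [h] with ε hε
  exact neg_lt_neg_iff.1 hε

section Pole

open Complex

/-- `z_± = pole (±1) ((E + iε) / (4 cos k₊))`; the power is the principal branch. -/
noncomputable def pole (σ z : ℂ) : ℂ := z + σ * I * (1 - z ^ 2) ^ ((1 : ℂ) / 2)

theorem analyticAt_pole (σ : ℂ) {z : ℂ} (hz : 1 - z ^ 2 ∈ slitPlane) :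
    AnalyticAt ℂ (pole σ) z :=
  analyticAt_id.add (analyticAt_const.mul ((analyticAt_const.sub (analyticAt_id.pow 2)).cpow
    analyticAt_const hz))

variable {a : ℝ} (ha : |a| < 1)
include ha

theorem one_sub_sq_pos_of_abs_lt_one : 0 < 1 - a ^ 2 := by
  nlinarith [abs_nonneg a, sq_abs a]

theorem one_sub_ofReal_sq_mem_slitPlane : 1 - (a : ℂ) ^ 2 ∈ slitPlane := by
  exact_mod_cast ofReal_mem_slitPlane.2 (one_sub_sq_pos_of_abs_lt_one ha)

theorem one_sub_ofReal_sq_cpow (s : ℝ) : (1 - (a : ℂ) ^ 2) ^ (s : ℂ) = ((1 - a ^ 2) ^ s : ℝ) := by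
  rw [ofReal_cpow (one_sub_sq_pos_of_abs_lt_one ha).le]; push_cast; rfl

theorem pole_ofReal (σ : ℂ) : pole σ a = a + σ * I * √(1 - a ^ 2) := by
  rw [pole, show (1 : ℂ) / 2 = ((1 / 2 : ℝ) : ℂ) by push_cast; rfl,
    one_sub_ofReal_sq_cpow ha, Real.sqrt_eq_rpow]

theorem hasDerivAt_pole_ofReal (σ : ℂ) :
    HasDerivAt (pole σ) (1 - σ * I * a / √(1 - a ^ 2)) a := by
  have h := ((hasDerivAt_pow 2 (a : ℂ)).const_sub 1).cpow_const (c := 1 / 2)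
    (one_sub_ofReal_sq_mem_slitPlane ha)
  refine ((hasDerivAt_id (a : ℂ)).add (h.const_mul (σ * I))).congr_deriv ?_
  rw [show (1 : ℂ) / 2 - 1 = ((-(1 / 2) : ℝ) : ℂ) by push_cast; ring, one_sub_ofReal_sq_cpow ha,
    Real.rpow_neg (one_sub_sq_pos_of_abs_lt_one ha).le, ← Real.sqrt_eq_rpow]
  push_cast
  field_simp
  ring

theorem isBigO_norm_sq_pole_sub {σ : ℝ} (hσ : σ ^ 2 = 1) :
    (fun ε : ℝ => ‖pole σ (a + ε * I)‖ ^ 2 - (1 + 2 * σ * ε / √(1 - a ^ 2)))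
      =O[𝓝 0] fun ε => ε ^ 2 := by
  set c := √(1 - a ^ 2)
  have hc : 0 < c := Real.sqrt_pos.2 (one_sub_sq_pos_of_abs_lt_one ha)
  have hc2 : c ^ 2 = 1 - a ^ 2 := Real.sq_sqrt (one_sub_sq_pos_of_abs_lt_one ha).le
  have hline : HasDerivAt (fun ε : ℝ => (a : ℂ) + ε * I) I 0 := by
    simpa using ((hasDerivAt_id (0 : ℂ)).mul_const I).const_add (a : ℂ) |>.comp_ofReal
  have hcurve : HasDerivAt (fun ε : ℝ => pole σ (a + ε * I)) (I * (1 - σ * I * a / c)) 0 := by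
    rw [mul_comm]
    exact HasDerivAt.comp_of_eq (hh₂ := hasDerivAt_pole_ofReal ha σ) (hh := hline) (hy := by simp)
  have hanalytic : AnalyticAt ℝ (fun ε : ℝ => ‖pole σ (a + ε * I)‖ ^ 2) 0 := by
    refine AnalyticAt.norm_sq ((analyticAt_pole σ (one_sub_ofReal_sq_mem_slitPlane ha)
      ).restrictScalars.comp_of_eq ?_ (by simp))
    exact analyticAt_const.add ((ofRealCLM.analyticAt 0).mul analyticAt_const)
  have hvalue : ‖pole σ (a + (0 : ℝ) * I)‖ ^ 2 = 1 := by
    rw [ofReal_zero, zero_mul, add_zero, pole_ofReal ha, Complex.sq_norm, Complex.normSq_apply]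
    simp
    linear_combination c ^ 2 * hσ + hc2
  have hderiv : deriv (fun ε : ℝ => ‖pole σ (a + ε * I)‖ ^ 2) 0 = 2 * σ / c := by
    rw [hcurve.norm_sq.deriv, ofReal_zero, zero_mul, add_zero, pole_ofReal ha, Complex.inner]
    simp
    field_simp
    linear_combination σ * hc2
  refine hanalytic.isBigO_sub_sub_smul_deriv.congr (fun ε => ?_) (fun ε => ?_)
  · rw [zero_add, hvalue, hderiv, smul_eq_mul]; ring
  · rw [Real.norm_eq_abs, sq_abs]

end Pole

theorem pole_modulus_expansion (a : ℝ) (ha : |a| < 1) :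
    ((fun ε : ℝ => ‖((a : ℂ) + ε * Complex.I +
        Complex.I * (((1 : ℂ) - ((a : ℂ) + ε * Complex.I) ^ 2) ^ ((1 : ℂ) / 2)))‖ ^ 2
        - (1 + 2 * ε / Real.sqrt (1 - a ^ 2))) =O[𝓝[>] (0 : ℝ)] fun ε => ε ^ 2) ∧
    ((fun ε : ℝ => ‖((a : ℂ) + ε * Complex.I -
        Complex.I * (((1 : ℂ) - ((a : ℂ) + ε * Complex.I) ^ 2) ^ ((1 : ℂ) / 2)))‖ ^ 2
        - (1 - 2 * ε / Real.sqrt (1 - a ^ 2))) =O[𝓝[>] (0 : ℝ)] fun ε => ε ^ 2) ∧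
    (∀ᶠ ε : ℝ in 𝓝[>] (0 : ℝ),
      ‖((a : ℂ) + (ε : ℂ) * Complex.I -
        Complex.I * (((1 : ℂ) - ((a : ℂ) + (ε : ℂ) * Complex.I) ^ 2) ^ ((1 : ℂ) / 2)))‖ < 1 ∧
      1 < ‖((a : ℂ) + (ε : ℂ) * Complex.I +
        Complex.I * (((1 : ℂ) - ((a : ℂ) + (ε : ℂ) * Complex.I) ^ 2) ^ ((1 : ℂ) / 2)))‖) := by
  set S : ℝ → ℂ := fun ε => (1 - (a + ε * Complex.I) ^ 2) ^ ((1 : ℂ) / 2)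
  set zplus : ℝ → ℂ := fun ε => a + ε * Complex.I + Complex.I * S ε
  set zminus : ℝ → ℂ := fun ε => a + ε * Complex.I - Complex.I * S ε
  set c := √(1 - a ^ 2)
  have hplus : (fun ε => ‖zplus ε‖ ^ 2 - (1 + 2 * ε / c)) =O[𝓝[>] 0] fun ε => ε ^ 2 :=
    ((isBigO_norm_sq_pole_sub ha (σ := 1) (one_pow 2)).mono nhdsWithin_le_nhds).congr_left
      fun ε => by simp [pole, S, zplus, c]
  have hminus : (fun ε => ‖zminus ε‖ ^ 2 - (1 - 2 * ε / c)) =O[𝓝[>] 0] fun ε => ε ^ 2 :=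
    ((isBigO_norm_sq_pole_sub ha (σ := -1) (by norm_num)).mono nhdsWithin_le_nhds).congr_left
      fun ε => by simp only [pole, S, zminus, c]; push_cast; ring_nf
  have hslope : 0 < 2 / c := div_pos two_pos (Real.sqrt_pos.2 (one_sub_sq_pos_of_abs_lt_one ha))
  refine ⟨hplus, hminus, ?_⟩
  filter_upwards [eventually_lt_const_of_isBigO_sub_linear (f := fun ε => ‖zminus ε‖ ^ 2)
      (c₀ := 1) (neg_neg_of_pos hslope) (hminus.congr_left fun ε => by ring),
    eventually_const_lt_of_isBigO_sub_linear (f := fun ε => ‖zplus ε‖ ^ 2)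
      (c₀ := 1) hslope (hplus.congr_left fun ε => by ring)]
    with ε hinside houtside
  exact ⟨(sq_lt_one_iff₀ (norm_nonneg _)).1 hinside, (one_lt_sq_iff₀ (norm_nonneg _)).1 houtside⟩
end

section
/- As distributions in the variables k₁, k₂ (for fixed p₁, p₂ with sin k₁ ≠ sin k₂ on the support), the product δ_{4π}(k₁−p₁)δ_{4π}(k₂−p₂) + δ_{4π}(k₁−p₁+2π)δ_{4π}(k₂−p₂+2π) equals (1/2)·δ_{2π}(k₋−p₋)·δ_{2π}(k₊−p₊), where k_± = (k₁±k₂)/2 and p_± = (p₁±p₂)/2. -/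
-- summability of 1/(1+|n|)^2 over ℤ
lemma aux_g_summable : Summable (fun n : ℤ => ((1:ℝ) + |(n:ℝ)|)⁻¹ ^ 2) := by
  have hnat : Summable (fun n : ℕ => ((1:ℝ) + |(n:ℝ)|)⁻¹ ^ 2) := by
    have h := (summable_nat_add_iff (f := fun n : ℕ => ((n:ℝ) ^ 2)⁻¹) 1).2
      (Real.summable_nat_pow_inv.2 one_lt_two)
    refine h.congr fun n => ?_
    push_cast
    rw [abs_of_nonneg (by positivity)]
    rw [inv_pow]
    ring_nf
  refine Summable.of_nat_of_neg (hnat.congr fun n => by push_cast; ring_nf) ?_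
  refine (hnat.congr fun n => ?_)
  push_cast
  rw [abs_neg]


lemma aux_decay (φ : SchwartzMap (ℝ × ℝ) ℂ) :
    ∃ D : ℝ, 0 ≤ D ∧ ∀ x : ℝ × ℝ, ‖φ x‖ * (1 + ‖x‖) ^ 4 ≤ D := by
  obtain ⟨C₀, hC₀pos, hC₀⟩ := φ.decay 0 0
  obtain ⟨C₄, hC₄pos, hC₄⟩ := φ.decay 4 0
  refine ⟨16 * (C₀ + C₄), ?_, fun x => ?_⟩
  · nlinarith
  · have h0 := hC₀ x
    have h4 := hC₄ x
    simp only [pow_zero, one_mul, norm_iteratedFDeriv_zero] at h0 h4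
    set t := ‖x‖ with ht
    set s := ‖φ x‖ with hs
    have hs0 : 0 ≤ s := norm_nonneg _
    have ht0 : 0 ≤ t := norm_nonneg _
    have h1 : t ≤ 1 + t ^ 4 := by nlinarith [sq_nonneg (t - 1), sq_nonneg (t ^ 2 - 1), sq_nonneg t, sq_nonneg (t ^ 2 - t)]
    have h2 : t ^ 2 ≤ 1 + t ^ 4 := by nlinarith [sq_nonneg (t ^ 2 - 1)]
    have h3 : t ^ 3 ≤ 1 + t ^ 4 := by nlinarith [sq_nonneg (t ^ 2 - t), sq_nonneg (t - 1), sq_nonneg t, sq_nonneg (t ^ 2 - 1)]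
    nlinarith [mul_le_mul_of_nonneg_left h1 hs0, mul_le_mul_of_nonneg_left h2 hs0,
      mul_le_mul_of_nonneg_left h3 hs0]

set_option maxHeartbeats 1000000 in
lemma aux_summable (φ : SchwartzMap (ℝ × ℝ) ℂ) (p₁ p₂ : ℝ) :
    Summable (fun ab : ℤ × ℤ =>
      φ (p₁ + 2 * Real.pi * (ab.1 + ab.2), p₂ + 2 * Real.pi * (ab.2 - ab.1))) := by
  obtain ⟨D, hD0, hD⟩ := aux_decay φ
  set K : ℝ := |p₁ - p₂| + |p₁ + p₂| with hK
  have hK0 : 0 ≤ K := by positivity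
  set M : ℝ := 1 + K with hM
  have hM1 : 1 ≤ M := by linarith
  have hprod : Summable (fun ab : ℤ × ℤ =>
      ((1:ℝ) + |(ab.1:ℝ)|)⁻¹ ^ 2 * ((1:ℝ) + |(ab.2:ℝ)|)⁻¹ ^ 2) :=
    aux_g_summable.mul_of_nonneg aux_g_summable (fun n => by positivity) (fun n => by positivity)
  refine Summable.of_norm_bounded ((hprod.mul_left (M ^ 4 * D))) ?_
  rintro ⟨a, b⟩
  simp only
  set u : ℝ := p₁ + 2 * Real.pi * ((a:ℝ) + (b:ℝ)) with hu
  set v : ℝ := p₂ + 2 * Real.pi * ((b:ℝ) - (a:ℝ)) with hv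
  set x : ℝ × ℝ := (u, v) with hx
  have hxu : |u| ≤ ‖x‖ := by
    have := norm_fst_le x
    simpa [Real.norm_eq_abs] using this
  have hxv : |v| ≤ ‖x‖ := by
    have := norm_snd_le x
    simpa [Real.norm_eq_abs] using this
  have hx0 : 0 ≤ ‖x‖ := norm_nonneg x
  have hpi : (3:ℝ) < Real.pi := Real.pi_gt_three
  -- bound on |a|
  have hua : u - v = (p₁ - p₂) + 4 * Real.pi * (a:ℝ) := by rw [hu, hv]; ring
  have hub : u + v = (p₁ + p₂) + 4 * Real.pi * (b:ℝ) := by rw [hu, hv]; ring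
  have ha : 4 * Real.pi * |(a:ℝ)| ≤ 2 * ‖x‖ + K := by
    have h1 := abs_le.1 hxu
    have h2 := abs_le.1 hxv
    have h3 := le_abs_self (p₁ - p₂)
    have h4 := neg_abs_le (p₁ - p₂)
    have h5 := le_abs_self (p₁ + p₂)
    have h6 := neg_abs_le (p₁ + p₂)
    rcases abs_cases ((a:ℝ)) with ⟨h, _⟩ | ⟨h, _⟩ <;> rw [h] <;> linarith
  have hb : 4 * Real.pi * |(b:ℝ)| ≤ 2 * ‖x‖ + K := by
    have h1 := abs_le.1 hxu
    have h2 := abs_le.1 hxv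
    have h3 := le_abs_self (p₁ - p₂)
    have h4 := neg_abs_le (p₁ - p₂)
    have h5 := le_abs_self (p₁ + p₂)
    have h6 := neg_abs_le (p₁ + p₂)
    rcases abs_cases ((b:ℝ)) with ⟨h, _⟩ | ⟨h, _⟩ <;> rw [h] <;> linarith
  have ha0 : 0 ≤ |(a:ℝ)| := abs_nonneg _
  have hb0 : 0 ≤ |(b:ℝ)| := abs_nonneg _
  have h7a : 3 * |(a:ℝ)| ≤ Real.pi * |(a:ℝ)| := mul_le_mul_of_nonneg_right hpi.le ha0
  have h7b : 3 * |(b:ℝ)| ≤ Real.pi * |(b:ℝ)| := mul_le_mul_of_nonneg_right hpi.le hb0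
  have hKx := mul_nonneg hK0 hx0
  have ha' : 1 + |(a:ℝ)| ≤ M * (1 + ‖x‖) := by
    have : M * (1 + ‖x‖) = 1 + K + ‖x‖ + K * ‖x‖ := by rw [hM]; ring
    rw [this]; linarith
  have hb' : 1 + |(b:ℝ)| ≤ M * (1 + ‖x‖) := by
    have : M * (1 + ‖x‖) = 1 + K + ‖x‖ + K * ‖x‖ := by rw [hM]; ring
    rw [this]; linarith
  have hA : (0:ℝ) < 1 + |(a:ℝ)| := by linarith
  have hB : (0:ℝ) < 1 + |(b:ℝ)| := by linarith
  have key : ‖φ x‖ * ((1 + |(a:ℝ)|) ^ 2 * (1 + |(b:ℝ)|) ^ 2) ≤ M ^ 4 * D := by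
    have h2a : (1 + |(a:ℝ)|) ^ 2 ≤ (M * (1 + ‖x‖)) ^ 2 := pow_le_pow_left₀ hA.le ha' 2
    have h2b : (1 + |(b:ℝ)|) ^ 2 ≤ (M * (1 + ‖x‖)) ^ 2 := pow_le_pow_left₀ hB.le hb' 2
    have h4 : (1 + |(a:ℝ)|) ^ 2 * (1 + |(b:ℝ)|) ^ 2 ≤ M ^ 4 * (1 + ‖x‖) ^ 4 := by
      calc (1 + |(a:ℝ)|) ^ 2 * (1 + |(b:ℝ)|) ^ 2
          ≤ (M * (1 + ‖x‖)) ^ 2 * (M * (1 + ‖x‖)) ^ 2 :=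
            mul_le_mul h2a h2b (by positivity) (by positivity)
        _ = M ^ 4 * (1 + ‖x‖) ^ 4 := by ring
    calc ‖φ x‖ * ((1 + |(a:ℝ)|) ^ 2 * (1 + |(b:ℝ)|) ^ 2)
        ≤ ‖φ x‖ * (M ^ 4 * (1 + ‖x‖) ^ 4) :=
          mul_le_mul_of_nonneg_left h4 (norm_nonneg _)
      _ = M ^ 4 * (‖φ x‖ * (1 + ‖x‖) ^ 4) := by ring
      _ ≤ M ^ 4 * D := by
          exact mul_le_mul_of_nonneg_left (hD x) (by positivity)
  have hrw : ((1:ℝ) + |(a:ℝ)|)⁻¹ ^ 2 * ((1:ℝ) + |(b:ℝ)|)⁻¹ ^ 2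
      = ((1 + |(a:ℝ)|) ^ 2 * (1 + |(b:ℝ)|) ^ 2)⁻¹ := by
    rw [mul_inv, inv_pow, inv_pow]
  show ‖φ x‖ ≤ M ^ 4 * D * (((1:ℝ) + |(a:ℝ)|)⁻¹ ^ 2 * ((1:ℝ) + |(b:ℝ)|)⁻¹ ^ 2)
  rw [hrw, ← div_eq_mul_inv, le_div_iff₀ (by positivity)]
  exact key


theorem dirac_comb_momentum_identity (p₁ p₂ : ℝ) (φ : SchwartzMap (ℝ × ℝ) ℂ) :
    (∑' nm : ℤ × ℤ, φ (p₁ + 4 * Real.pi * nm.1, p₂ + 4 * Real.pi * nm.2)) +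
    (∑' nm : ℤ × ℤ, φ (p₁ - 2 * Real.pi + 4 * Real.pi * nm.1,
        p₂ - 2 * Real.pi + 4 * Real.pi * nm.2)) =
    (1 / 2) * (2 * ∑' ab : ℤ × ℤ,
        φ (p₁ + 2 * Real.pi * (ab.1 + ab.2), p₂ + 2 * Real.pi * (ab.2 - ab.1))) := by
  have hsum : Summable (fun ab : ℤ × ℤ =>
      φ (p₁ + 2 * Real.pi * (ab.1 + ab.2), p₂ + 2 * Real.pi * (ab.2 - ab.1))) :=
    aux_summable φ p₁ p₂
  set F : ℤ × ℤ → ℂ := fun ab =>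
    φ (p₁ + 2 * Real.pi * (ab.1 + ab.2), p₂ + 2 * Real.pi * (ab.2 - ab.1)) with hF
  set S : Set (ℤ × ℤ) := {ab | (ab.1 + ab.2) % 2 = 0} with hS
  let e₁ : (ℤ × ℤ) ≃ S :=
    { toFun := fun nm => ⟨(nm.1 - nm.2, nm.1 + nm.2), by
        simp only [hS, Set.mem_setOf_eq]; omega⟩
      invFun := fun x => ((x.1.1 + x.1.2) / 2, (x.1.2 - x.1.1) / 2)
      left_inv := by rintro ⟨n, m⟩; simp only [Prod.mk.injEq]; omega
      right_inv := by
        rintro ⟨⟨a, b⟩, h⟩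
        simp only [hS, Set.mem_setOf_eq] at h
        apply Subtype.ext
        simp only [Prod.mk.injEq]
        omega }
  let e₂ : (ℤ × ℤ) ≃ ↥Sᶜ :=
    { toFun := fun nm => ⟨(nm.1 - nm.2, nm.1 + nm.2 - 1), by
        simp only [hS, Set.mem_compl_iff, Set.mem_setOf_eq]; omega⟩
      invFun := fun x => ((x.1.1 + x.1.2 + 1) / 2, (x.1.2 - x.1.1 + 1) / 2)
      left_inv := by rintro ⟨n, m⟩; simp only [Prod.mk.injEq]; omega
      right_inv := by
        rintro ⟨⟨a, b⟩, h⟩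
        simp only [hS, Set.mem_compl_iff, Set.mem_setOf_eq] at h
        apply Subtype.ext
        simp only [Prod.mk.injEq]
        omega }
  have h1 : (∑' nm : ℤ × ℤ, φ (p₁ + 4 * Real.pi * nm.1, p₂ + 4 * Real.pi * nm.2))
      = ∑' x : S, F x := by
    rw [← e₁.tsum_eq (fun x : S => F (x : ℤ × ℤ))]
    refine tsum_congr fun nm => ?_
    obtain ⟨n, m⟩ := nm
    show φ _ = φ _
    congr 1
    simp only [e₁, Equiv.coe_fn_mk, Prod.mk.injEq]
    constructor <;> · push_cast; ring
  have h2 : (∑' nm : ℤ × ℤ, φ (p₁ - 2 * Real.pi + 4 * Real.pi * nm.1,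
        p₂ - 2 * Real.pi + 4 * Real.pi * nm.2))
      = ∑' x : ↥Sᶜ, F x := by
    rw [← e₂.tsum_eq (fun x : ↥Sᶜ => F (x : ℤ × ℤ))]
    refine tsum_congr fun nm => ?_
    obtain ⟨n, m⟩ := nm
    show φ _ = φ _
    congr 1
    simp only [e₂, Equiv.coe_fn_mk, Prod.mk.injEq]
    constructor <;> · push_cast; ring
  rw [h1, h2, Summable.tsum_add_tsum_compl (s := S) (hsum.subtype S) (hsum.subtype Sᶜ)]
  ring
end
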